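/- arXiv:2209.13636 — 2 statements merged into one kernel-verified Lean document; each statement's English description precedes it below -/
import Mathlib

section
/- The length function \(\ell(n) = \lfloor\log_2 n\rfloor + 2\lfloor\log_2(\lfloor\log_2 n\rfloor + 1)\rfloor + 3\) for \(n \ge 1\) satisfies the Kraft inequality \(\sum_{n=1}^\infty 2^{-\ell(n)} \le 1\). -/
/-- The Elias-style codeword length function
`ℓ(n) = ⌊log₂ n⌋ + 2⌊log₂(⌊log₂ n⌋+1)⌋ + 3` for `n ≥ 1`. -/
def eliasLen (n : ℕ) : ℕ := Nat.log 2 n + 2 * Nat.log 2 (Nat.log 2 n + 1) + 3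

/-!
Summing `2⁻¹ ^ ⌊log₂ n⌋ * g ⌊log₂ n⌋` over `n ≥ 1` gives `∑ₖ g k`, since exactly `2 ^ k` integers
have `⌊log₂ n⌋ = k`. Writing `ℓ(n) = L + (2⌊log₂(L + 1)⌋ + 3)` with `L = ⌊log₂ n⌋`, two such
collapses turn the Kraft sum into `∑ₘ 2⁻¹ ^ (m + 3) = 1/4`.
-/

open ENNReal

lemma preimage_log_two_succ (k : ℕ) :
    (fun n => Nat.log 2 (n + 1)) ⁻¹' {k} = ↑(Finset.Ico (2 ^ k - 1) (2 ^ (k + 1) - 1)) := by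
  ext n
  have := Nat.one_le_two_pow (n := k)
  simp only [Set.mem_preimage, Set.mem_singleton_iff, Finset.coe_Ico, Set.mem_Ico,
    Nat.log_eq_iff (.inr ⟨one_lt_two, n.succ_ne_zero⟩)]
  omega

lemma tsum_inv_two_pow_log_mul (g : ℕ → ℝ≥0∞) :
    ∑' n, 2⁻¹ ^ Nat.log 2 (n + 1) * g (Nat.log 2 (n + 1)) = ∑' k, g k := by
  rw [← ENNReal.tsum_fiberwise _ fun n => Nat.log 2 (n + 1)]
  refine tsum_congr fun k => ?_
  rw [preimage_log_two_succ]
  refine (Finset.tsum_subtype' _ fun n => 2⁻¹ ^ Nat.log 2 (n + 1) * g (Nat.log 2 (n + 1))).trans ?_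
  have hcard : 2 ^ (k + 1) - 1 - (2 ^ k - 1) = 2 ^ k := by
    have := Nat.one_le_two_pow (n := k)
    rw [pow_succ]
    omega
  calc ∑ n ∈ Finset.Ico (2 ^ k - 1) (2 ^ (k + 1) - 1),
        2⁻¹ ^ Nat.log 2 (n + 1) * g (Nat.log 2 (n + 1))
      = ∑ n ∈ Finset.Ico (2 ^ k - 1) (2 ^ (k + 1) - 1), 2⁻¹ ^ k * g k := by
        refine Finset.sum_congr rfl fun n hn => ?_
        have hlog : Nat.log 2 (n + 1) = k := by
          rwa [← Finset.mem_coe, ← preimage_log_two_succ] at hn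
        rw [hlog]
    _ = g k := by
        rw [Finset.sum_const, Nat.card_Ico, hcard, nsmul_eq_mul, ← mul_assoc, Nat.cast_pow,
          Nat.cast_ofNat, ← mul_pow, ENNReal.mul_inv_cancel two_ne_zero ofNat_ne_top, one_pow,
          one_mul]

lemma tsum_inv_two_pow_add_three : ∑' m : ℕ, (2⁻¹ : ℝ≥0∞) ^ (m + 3) = 4⁻¹ := by
  simp_rw [pow_add, ENNReal.tsum_mul_right, ENNReal.tsum_geometric_two]
  rw [pow_succ', ← mul_assoc, ENNReal.mul_inv_cancel two_ne_zero ofNat_ne_top, one_mul,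
    ← ENNReal.inv_pow]
  norm_num

/-- The length function `eliasLen` satisfies the Kraft inequality `∑_{n≥1} 2^{-ℓ(n)} ≤ 1`. -/
theorem eliasLen_kraft : ∑' n : ℕ, ((2 : ℝ) ^ eliasLen (n + 1))⁻¹ ≤ 1 := by
  have hsum : ∑' n : ℕ, (2⁻¹ : ℝ≥0∞) ^ eliasLen (n + 1) = 4⁻¹ := calc
    ∑' n : ℕ, (2⁻¹ : ℝ≥0∞) ^ eliasLen (n + 1)
      = ∑' n : ℕ, (2⁻¹ : ℝ≥0∞) ^ Nat.log 2 (n + 1) *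
          2⁻¹ ^ (2 * Nat.log 2 (Nat.log 2 (n + 1) + 1) + 3) := by
      simp only [eliasLen, add_assoc, pow_add]
    _ = ∑' k : ℕ, (2⁻¹ : ℝ≥0∞) ^ Nat.log 2 (k + 1) * 2⁻¹ ^ (Nat.log 2 (k + 1) + 3) := by
      rw [tsum_inv_two_pow_log_mul fun k => 2⁻¹ ^ (2 * Nat.log 2 (k + 1) + 3)]
      simp only [two_mul, add_assoc, pow_add]
    _ = 4⁻¹ := by
      rw [tsum_inv_two_pow_log_mul fun m => 2⁻¹ ^ (m + 3), tsum_inv_two_pow_add_three]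
  have hterm (n : ℕ) :
      ((2 : ℝ) ^ eliasLen (n + 1))⁻¹ = ((2⁻¹ : ℝ≥0∞) ^ eliasLen (n + 1)).toReal := by
    simp
  rw [funext hterm, ← ENNReal.tsum_toReal_eq fun n => by simp, hsum]
  norm_num
end

section
/- Let \(S : \mathbb{N} \to \mathbb{R}\) satisfy \(\lim_{n\to\infty} S(n)/n = s\) and \(S(n) \ge ns\) for all \(n\). Then the Hilberg exponents coincide: \(\mathrm{hilberg}_{n\to\infty}(S(n) - ns) = \mathrm{hilberg}_{n\to\infty}(2S(n) - S(2n))\), where \(\mathrm{hilberg}_{n\to\infty} T(n) := \max\{0, \limsup_{n\to\infty} \log T(n)/\log n\}\). -/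
open Filter

/-- The Hilberg exponent `[limsup_n log T(n)/log n]₊`, with the convention
`log 0 = -∞` (so nonpositive terms contribute `⊥` to the limsup). -/
noncomputable def hilbergExp (T : ℕ → ℝ) : EReal :=
  max 0 (Filter.limsup
    (fun n : ℕ => if T n ≤ 0 then (⊥ : EReal)
      else ((Real.log (T n) / Real.log n : ℝ) : EReal)) Filter.atTop)

/-!
Write `f n = S n - n s ≥ 0` and `g n = 2 S n - S (2n) = 2 f n - f (2n)`. Since `g ≤ 2 f`, the
exponent of `g` is at most that of `f`. Conversely, `f n = ∑ₖ g (2ᵏ n) / 2ᵏ⁺¹` because the tail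
`f (2ᴷ n) / 2ᴷ` vanishes as `f n / n → 0`; a bound `g m ≤ m ^ z` with `z < 1` then sums, as a
geometric series of ratio `2 ^ (z - 1)`, to `f n ≤ C n ^ z`. Exponents `z ≥ 1` are free, since
`f n ≤ n` eventually.
-/

lemma hilbergExp_le_of_eventually_le_mul_rpow {T : ℕ → ℝ} {C δ : ℝ} (hC : 0 < C) (hδ : 0 ≤ δ)
    (h : ∀ᶠ n : ℕ in atTop, T n ≤ C * (n : ℝ) ^ δ) :
    hilbergExp T ≤ δ := by
  refine max_le (by exact_mod_cast hδ) ?_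
  rw [← EReal.le_of_forall_lt_iff_le]
  intro z hz
  have hδz : δ < z := by exact_mod_cast hz
  apply limsup_le_of_le (by isBoundedDefault)
  have hlog_large : ∀ᶠ n : ℕ in atTop, Real.log C / (z - δ) ≤ Real.log n :=
    (Real.tendsto_log_atTop.comp tendsto_natCast_atTop_atTop).eventually_ge_atTop _
  filter_upwards [h, hlog_large, eventually_ge_atTop 2] with n hn hlogC hn2
  split_ifs with hT
  · exact bot_le
  rw [not_le] at hT
  have hlogn : 0 < Real.log n := Real.log_pos (by exact_mod_cast hn2)
  have hlogT : Real.log (T n) ≤ Real.log C + δ * Real.log n :=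
    calc Real.log (T n) ≤ Real.log (C * (n : ℝ) ^ δ) := Real.log_le_log hT hn
      _ = Real.log C + δ * Real.log n := by
        rw [Real.log_mul hC.ne' (by positivity), Real.log_rpow (by positivity)]
  rw [div_le_iff₀ (by linarith)] at hlogC
  have : Real.log (T n) / Real.log n ≤ z := by
    rw [div_le_iff₀ hlogn]
    nlinarith
  exact_mod_cast this

lemma eventually_le_rpow_of_hilbergExp_lt {T : ℕ → ℝ} {δ : ℝ} (h : hilbergExp T < δ) :
    ∀ᶠ n : ℕ in atTop, T n ≤ (n : ℝ) ^ δ := by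
  have hlimsup := eventually_lt_of_limsup_lt ((le_max_right _ _).trans_lt h)
  filter_upwards [hlimsup, eventually_ge_atTop 2] with n hn hn2
  rcases le_or_gt (T n) 0 with hT | hT
  · exact hT.trans (by positivity)
  rw [if_neg hT.not_ge] at hn
  have hratio : Real.log (T n) / Real.log n < δ := by exact_mod_cast hn
  have hlogn : 0 < Real.log n := Real.log_pos (by exact_mod_cast hn2)
  refine (Real.lt_rpow_iff_log_lt hT (by positivity)).2 ?_ |>.le
  rwa [div_lt_iff₀ hlogn] at hratio

lemma hilbergExp_le_hilbergExp {T U : ℕ → ℝ}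
    (h : ∀ z : ℝ, 0 < z → (∀ᶠ n : ℕ in atTop, U n ≤ (n : ℝ) ^ z) →
      ∃ C > 0, ∀ᶠ n : ℕ in atTop, T n ≤ C * (n : ℝ) ^ z) :
    hilbergExp T ≤ hilbergExp U := by
  rw [← EReal.le_of_forall_lt_iff_le]
  intro z hz
  have hz0 : (0 : ℝ) < z := by exact_mod_cast (le_max_left _ _).trans_lt hz
  obtain ⟨C, hC, hT⟩ := h z hz0 (eventually_le_rpow_of_hilbergExp_lt hz)
  exact hilbergExp_le_of_eventually_le_mul_rpow hC hz0.le hT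

lemma hilbergExp_two_mul_sub_le {f : ℕ → ℝ} (hf : ∀ n, 0 ≤ f n) :
    hilbergExp (fun n => 2 * f n - f (2 * n)) ≤ hilbergExp f := by
  refine hilbergExp_le_hilbergExp fun z _ hfz => ⟨2, two_pos, ?_⟩
  filter_upwards [hfz] with n hn
  linarith [hf (2 * n)]

lemma dyadic_telescope (f : ℕ → ℝ) (n K : ℕ) :
    f n = (∑ k ∈ Finset.range K, (2 * f (2 ^ k * n) - f (2 * (2 ^ k * n))) / 2 ^ (k + 1)) +
      f (2 ^ K * n) / 2 ^ K := by
  induction K with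
  | zero => simp
  | succ K ih =>
    rw [ih, Finset.sum_range_succ, show 2 * (2 ^ K * n) = 2 ^ (K + 1) * n by ring]
    ring

lemma tendsto_div_two_pow_of_tendsto_div {f : ℕ → ℝ}
    (hf : Tendsto (fun n : ℕ => f n / n) atTop (nhds 0)) {n : ℕ} (hn : 0 < n) :
    Tendsto (fun K : ℕ => f (2 ^ K * n) / 2 ^ K) atTop (nhds 0) := by
  have hmul : Tendsto (fun K : ℕ => 2 ^ K * n) atTop atTop :=
    tendsto_atTop_mono (fun K => Nat.le_mul_of_pos_right _ hn)
      (tendsto_pow_atTop_atTop_of_one_lt one_lt_two)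
  have h := (hf.comp hmul).const_mul (n : ℝ)
  rw [mul_zero] at h
  refine h.congr fun K => ?_
  have : (n : ℝ) ≠ 0 := by positivity
  simp only [Function.comp_apply]
  push_cast
  field_simp

lemma rpow_two_pow_mul_div_two_pow (z : ℝ) (n k : ℕ) :
    ((2 ^ k * n : ℕ) : ℝ) ^ z / 2 ^ (k + 1) = (2 ^ (z - 1) : ℝ) ^ k / 2 * (n : ℝ) ^ z := by
  push_cast
  rw [Real.mul_rpow (by positivity) (by positivity), ← Real.rpow_natCast (2 ^ (z - 1) : ℝ),
    ← Real.rpow_mul zero_le_two, ← Real.rpow_natCast 2 k, ← Real.rpow_mul zero_le_two, pow_succ,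
    ← Real.rpow_natCast 2 k, mul_comm (z - 1), mul_sub_one, Real.rpow_sub two_pos,
    Real.rpow_natCast, mul_comm (k : ℝ) z]
  ring

lemma sum_div_two_pow_le_of_le_rpow {g : ℕ → ℝ} {z : ℝ} (hz : z < 1) {N n : ℕ}
    (hg : ∀ m ≥ N, g m ≤ (m : ℝ) ^ z) (hn : N ≤ n) (K : ℕ) :
    ∑ k ∈ Finset.range K, g (2 ^ k * n) / 2 ^ (k + 1) ≤
      (1 - 2 ^ (z - 1))⁻¹ / 2 * (n : ℝ) ^ z := by
  set r : ℝ := 2 ^ (z - 1)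
  have hr0 : 0 ≤ r := by positivity
  have hr1 : r < 1 := Real.rpow_lt_one_of_one_lt_of_neg one_lt_two (by linarith)
  have hgeom : ∑ k ∈ Finset.range K, r ^ k ≤ (1 - r)⁻¹ :=
    sum_le_hasSum _ (fun k _ => pow_nonneg hr0 k) (hasSum_geometric_of_lt_one hr0 hr1)
  calc ∑ k ∈ Finset.range K, g (2 ^ k * n) / 2 ^ (k + 1)
      ≤ ∑ k ∈ Finset.range K, r ^ k / 2 * (n : ℝ) ^ z := by
        refine Finset.sum_le_sum fun k _ => ?_
        rw [← rpow_two_pow_mul_div_two_pow]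
        gcongr
        exact hg _ (hn.trans (Nat.le_mul_of_pos_left n (by positivity)))
    _ = (∑ k ∈ Finset.range K, r ^ k) / 2 * (n : ℝ) ^ z := by
        rw [Finset.sum_div, Finset.sum_mul]
    _ ≤ (1 - r)⁻¹ / 2 * (n : ℝ) ^ z := by gcongr

lemma hilbergExp_le_hilbergExp_two_mul_sub {f : ℕ → ℝ}
    (hf : Tendsto (fun n : ℕ => f n / n) atTop (nhds 0)) :
    hilbergExp f ≤ hilbergExp (fun n => 2 * f n - f (2 * n)) := by
  refine hilbergExp_le_hilbergExp fun z hz0 hgz => ?_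
  rcases le_or_gt 1 z with hz1 | hz1
  · refine ⟨1, one_pos, ?_⟩
    filter_upwards [hf.eventually_le_const one_pos, eventually_ge_atTop 1] with n hn hn1
    have hn0 : (0 : ℝ) < n := by exact_mod_cast hn1
    rw [div_le_one hn0] at hn
    rw [one_mul]
    exact hn.trans (Real.self_le_rpow_of_one_le (by exact_mod_cast hn1) hz1)
  obtain ⟨N, hN⟩ := eventually_atTop.mp hgz
  refine ⟨(1 - 2 ^ (z - 1))⁻¹ / 2, ?_, ?_⟩
  · have : (2 : ℝ) ^ (z - 1) < 1 := Real.rpow_lt_one_of_one_lt_of_neg one_lt_two (by linarith)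
    have : 0 < 1 - (2 : ℝ) ^ (z - 1) := by linarith
    positivity
  filter_upwards [eventually_ge_atTop N, eventually_ge_atTop 1] with n hnN hn1
  have hbound : ∀ K : ℕ, f n - (1 - 2 ^ (z - 1))⁻¹ / 2 * (n : ℝ) ^ z ≤ f (2 ^ K * n) / 2 ^ K :=
    fun K => by
      linarith [dyadic_telescope f n K,
        sum_div_two_pow_le_of_le_rpow (g := fun m => 2 * f m - f (2 * m)) hz1 hN hnN K]
  linarith [ge_of_tendsto' (tendsto_div_two_pow_of_tendsto_div hf hn1) hbound]

/-- If `S n / n → s` and `S n ≥ n·s`, then the Hilberg exponents of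
`S(n) - n·s` and `2 S(n) - S(2n)` coincide. -/
theorem hilberg_identity (S : ℕ → ℝ) (s : ℝ)
    (hlim : Filter.Tendsto (fun n : ℕ => S n / n) Filter.atTop (nhds s))
    (hge : ∀ n : ℕ, (n : ℝ) * s ≤ S n) :
    hilbergExp (fun n => S n - n * s) = hilbergExp (fun n => 2 * S n - S (2 * n)) := by
  set f : ℕ → ℝ := fun n => S n - n * s
  have hdiff : (fun n => 2 * S n - S (2 * n)) = fun n => 2 * f n - f (2 * n) := by
    ext n
    simp only [f]
    push_cast
    ring
  have hf : Tendsto (fun n : ℕ => f n / n) atTop (nhds 0) := by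
    refine (sub_self s ▸ hlim.sub_const s).congr' ?_
    filter_upwards [eventually_ge_atTop 1] with n hn
    have : (n : ℝ) ≠ 0 := by positivity
    simp only [f]
    field_simp
  rw [hdiff]
  exact le_antisymm (hilbergExp_le_hilbergExp_two_mul_sub hf)
    (hilbergExp_two_mul_sub_le fun n => sub_nonneg.mpr (hge n))
end
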